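/- If f_i : G_i → G'_i are injective identity-preserving set maps, then the induced homomorphism Φ_Γ : (K_Γ, d_nl) → (K'_Γ, d_nl) is an isometric embedding with respect to the normal length metrics. -/

import Mathlib

open Monoid
open scoped commutatorElement

namespace GPaper

variable {ι : Type*}

/-- The relator subgroup of the graph product: normal closure of commutators of
elements of vertex groups at adjacent vertices. -/
def Rels (Γ : SimpleGraph ι) (G : ι → Type*) [∀ i, Group (G i)] : Subgroup (Monoid.CoprodI G) :=
  Subgroup.normalClosure
    { x | ∃ (i j : ι) (g : G i) (h : G j), Γ.Adj i j ∧
          x = ⁅Monoid.CoprodI.of g, Monoid.CoprodI.of h⁆ }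

instance (Γ : SimpleGraph ι) (G : ι → Type*) [∀ i, Group (G i)] : (Rels Γ G).Normal :=
  Subgroup.normalClosure_normal

/-- The graph product of the groups `G i` over the simplicial graph `Γ`. -/
abbrev GP (Γ : SimpleGraph ι) (G : ι → Type*) [∀ i, Group (G i)] :=
  Monoid.CoprodI G ⧸ Rels Γ G

/-- The canonical inclusion of a vertex group into the graph product. -/
def of (Γ : SimpleGraph ι) (G : ι → Type*) [∀ i, Group (G i)] (i : ι) : G i →* GP Γ G :=
  (QuotientGroup.mk' (Rels Γ G)).comp Monoid.CoprodI.of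

/-- The canonical homomorphism from the graph product to the direct product. -/
def proj [DecidableEq ι] (Γ : SimpleGraph ι) (G : ι → Type*) [∀ i, Group (G i)] :
    GP Γ G →* (∀ i, G i) :=
  QuotientGroup.lift (Rels Γ G) (Monoid.CoprodI.lift (fun i => MonoidHom.mulSingle G i)) (by
    intro x hx
    refine Subgroup.normalClosure_le_normal ?_ hx
    rintro y ⟨i, j, g, h, hadj, rfl⟩
    have hij : i ≠ j := hadj.ne
    simp only [SetLike.mem_coe, MonoidHom.mem_ker, map_commutatorElement,
      Monoid.CoprodI.lift_of]
    rw [commutatorElement_eq_one_iff_commute]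
    exact Pi.mulSingle_commute hij g h)

/-- The canonical epimorphism `G_Γ → G_Γ'` when `Γ'` is obtained from `Γ` by adding edges. -/
def mapGraph (Γ Γ' : SimpleGraph ι) (hΓ : Γ ≤ Γ') (G : ι → Type*) [∀ i, Group (G i)] :
    GP Γ G →* GP Γ' G :=
  QuotientGroup.lift (Rels Γ G) (QuotientGroup.mk' (Rels Γ' G)) (by
    intro x hx
    rw [QuotientGroup.ker_mk']
    refine Subgroup.normalClosure_le_normal ?_ hx
    rintro y ⟨i, j, g, h, hadj, rfl⟩
    exact Subgroup.subset_normalClosure ⟨i, j, g, h, hΓ hadj, rfl⟩)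

/-- The element of the graph product represented by a word (list of syllables). -/
def wordProd (Γ : SimpleGraph ι) (G : ι → Type*) [∀ i, Group (G i)]
    (w : List (Σ i, G i)) : GP Γ G :=
  (w.map fun s => of Γ G s.1 s.2).prod

/-- The image of a word in the direct product of the vertex groups. -/
def piProd [DecidableEq ι] (G : ι → Type*) [∀ i, Group (G i)]
    (w : List (Σ i, G i)) : ∀ i, G i :=
  (w.map fun s => Pi.mulSingle s.1 s.2).prod

/-- The ordered product of those syllables of a word that belong to `G i`. -/
def sylProd [DecidableEq ι] (G : ι → Type*) [∀ i, Group (G i)]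
    (w : List (Σ i, G i)) (i : ι) : G i :=
  (w.filterMap fun s => if h : s.1 = i then some (cast (congrArg G h) s.2) else none).prod

/-- The normal (syllable) length of an element of a graph product:
the minimal number of syllables in a word representing it. -/
noncomputable def nl (Γ : SimpleGraph ι) (G : ι → Type*) [∀ i, Group (G i)]
    (g : GP Γ G) : ℕ :=
  sInf { n | ∃ w : List (Σ i, G i), wordProd Γ G w = g ∧ w.length = n }

section Phi

open scoped Classical

variable [DecidableEq ι] {G G' : ι → Type*} [∀ i, Group (G i)] [∀ i, Group (G' i)]

/-- One step of the recursive construction of `Φ`: the new syllable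
`f(π(w))⁻¹ · f(π(w)s)` (dropped if trivial), where `g = π(w)`. -/
noncomputable def phiStep (f : ∀ i, G i → G' i) (g : ∀ i, G i) (s : Σ i, G i) : List (Σ i, G' i) :=
  if (f s.1 (g s.1))⁻¹ * f s.1 (g s.1 * s.2) = 1 then []
  else [⟨s.1, (f s.1 (g s.1))⁻¹ * f s.1 (g s.1 * s.2)⟩]

/-- Auxiliary recursion: process the word left to right, carrying the
image `g` of the prefix in the direct product. -/
noncomputable def phiAux (f : ∀ i, G i → G' i) : (∀ i, G i) → List (Σ i, G i) → List (Σ i, G' i)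
  | _, [] => []
  | g, s :: w => phiStep f g s ++ phiAux f (g * Pi.mulSingle s.1 s.2) w

/-- The word map `Φ : S* → S'*` induced by the set maps `f i : G i → G' i`. -/
noncomputable def phiWord (f : ∀ i, G i → G' i) (w : List (Σ i, G i)) : List (Σ i, G' i) :=
  phiAux f 1 w

end Phi

/-!
The word map `Φ` is the value at `1` of a cocycle `c(x, ·) : G_Γ → G'_Γ`, indexed by
`x ∈ ∏ G_i`, which sends a syllable `s ∈ G_i` to `f(x_i)⁻¹ f(x_i s)` and satisfies
`c(x, z₁z₂) = c(x, z₁) c(x·π(z₁), z₂)`. Its well-definedness on the graph product comes from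
realising it as the left component of a homomorphism into the regular wreath product
`G'_Γ ≀ ∏ G_i`. On `K_Γ = ker π` the cocycle identity makes `c(1, ·)` a homomorphism.
It never lengthens a word, and when the `f_i` are injective, the cocycle built from their left
inverses undoes it: `c_{f⁻¹}(f(x), c_f(x, z)) = z`. Hence it preserves normal length, and
`d_nl(Φx, Φy) = nl(Φ(x⁻¹y)) = nl(x⁻¹y)`.
-/

section GraphProduct

variable {G : ι → Type*} [∀ i, Group (G i)] {H : Type*} [Group H] (Γ : SimpleGraph ι)

lemma hom_ext {F F' : GP Γ G →* H} (h : ∀ i a, F (of Γ G i a) = F' (of Γ G i a)) : F = F' :=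
  QuotientGroup.monoidHom_ext _ (CoprodI.ext_hom _ _ fun i => MonoidHom.ext (h i))

lemma of_commute_of_adj {i j : ι} (hadj : Γ.Adj i j) (a : G i) (b : G j) :
    Commute (of Γ G i a) (of Γ G j b) := by
  rw [← commutatorElement_eq_one_iff_commute]
  have hrel : ⁅CoprodI.of a, CoprodI.of b⁆ ∈ Rels Γ G :=
    Subgroup.subset_normalClosure ⟨i, j, a, b, hadj, rfl⟩
  have h := (QuotientGroup.eq_one_iff _).2 hrel
  rw [← QuotientGroup.mk'_apply, map_commutatorElement] at h
  exact h

def lift (φ : ∀ i, G i →* H)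
    (hφ : ∀ ⦃i j⦄, Γ.Adj i j → ∀ (a : G i) (b : G j), Commute (φ i a) (φ j b)) :
    GP Γ G →* H :=
  QuotientGroup.lift (Rels Γ G) (CoprodI.lift φ) (by
    intro x hx
    refine Subgroup.normalClosure_le_normal ?_ hx
    rintro y ⟨i, j, a, b, hadj, rfl⟩
    simp only [SetLike.mem_coe, MonoidHom.mem_ker, map_commutatorElement, CoprodI.lift_of,
      commutatorElement_eq_one_iff_commute]
    exact hφ hadj a b)

@[simp] lemma lift_of (φ : ∀ i, G i →* H)
    (hφ : ∀ ⦃i j⦄, Γ.Adj i j → ∀ (a : G i) (b : G j), Commute (φ i a) (φ j b)) (i : ι) (a : G i) :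
    lift Γ φ hφ (of Γ G i a) = φ i a := by
  simp [lift, of]

@[simp] lemma wordProd_nil : wordProd Γ G [] = 1 := rfl

@[simp] lemma wordProd_cons (s : Σ i, G i) (w : List (Σ i, G i)) :
    wordProd Γ G (s :: w) = of Γ G s.1 s.2 * wordProd Γ G w := by
  simp [wordProd]

lemma wordProd_append (u v : List (Σ i, G i)) :
    wordProd Γ G (u ++ v) = wordProd Γ G u * wordProd Γ G v := by
  simp [wordProd]

lemma exists_wordProd_eq (z : GP Γ G) : ∃ w : List (Σ i, G i), wordProd Γ G w = z := by
  induction z using QuotientGroup.induction_on with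
  | H m =>
    induction m using CoprodI.induction_on with
    | one => exact ⟨[], rfl⟩
    | of i a => exact ⟨[⟨i, a⟩], by simp [wordProd, of]⟩
    | mul x y hx hy =>
      obtain ⟨u, hu⟩ := hx
      obtain ⟨v, hv⟩ := hy
      exact ⟨u ++ v, by rw [wordProd_append, hu, hv]; rfl⟩

lemma nl_wordProd_le_length (w : List (Σ i, G i)) : nl Γ G (wordProd Γ G w) ≤ w.length :=
  Nat.sInf_le ⟨w, rfl, rfl⟩

lemma exists_wordProd_eq_length_eq_nl (z : GP Γ G) :
    ∃ w : List (Σ i, G i), wordProd Γ G w = z ∧ w.length = nl Γ G z := by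
  obtain ⟨w, hw⟩ := exists_wordProd_eq Γ z
  exact Nat.sInf_mem (s := {n | ∃ w, wordProd Γ G w = z ∧ w.length = n}) ⟨w.length, w, hw, rfl⟩

variable [DecidableEq ι]

@[simp] lemma proj_of (i : ι) (a : G i) : proj Γ G (of Γ G i a) = Pi.mulSingle i a := by
  simp [proj, of]

end GraphProduct

section Cocycle

variable {G G' : ι → Type*} [∀ i, Group (G i)] [∀ i, Group (G' i)] (f : ∀ i, G i → G' i)
  (Γ : SimpleGraph ι)

/-- The syllable that `phiStep f x` emits for `⟨i, a⟩` (unless it is trivial). -/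
def phiSyllable (x : ∀ i, G i) (i : ι) (a : G i) : G' i :=
  (f i (x i))⁻¹ * f i (x i * a)

lemma phiSyllable_leftInverse {g : ∀ i, G' i → G i} (hgf : ∀ i, Function.LeftInverse (g i) (f i))
    (x : ∀ i, G i) (i : ι) (a : G i) :
    phiSyllable g (Pi.map f x) i (phiSyllable f x i a) = a := by
  simp [phiSyllable, hgf i _]

lemma wordProd_phiStep (x : ∀ i, G i) (s : Σ i, G i) :
    wordProd Γ G' (phiStep f x s) = of Γ G' s.1 (phiSyllable f x s.1 s.2) := by
  unfold phiStep
  split_ifs with h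
  · simp [phiSyllable, h]
  · simp [wordProd, phiSyllable]

variable [DecidableEq ι]

lemma phiSyllable_mul (x : ∀ i, G i) (i : ι) (a b : G i) :
    phiSyllable f x i (a * b) = phiSyllable f x i a * phiSyllable f (x * Pi.mulSingle i a) i b := by
  simp [phiSyllable, mul_assoc]

lemma mulSingle_phiSyllable (x : ∀ i, G i) (i : ι) (a : G i) :
    Pi.mulSingle i (phiSyllable f x i a) = (Pi.map f x)⁻¹ * Pi.map f (x * Pi.mulSingle i a) := by
  funext j
  rcases eq_or_ne j i with rfl | hji
  · simp [phiSyllable]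
  · simp [Pi.mulSingle_eq_of_ne hji]

/-- The wreath product records the cocycle at `x` in its left component at `x⁻¹`, so that
the translation `y ↦ q⁻¹ y` of `≀ᵣ` becomes the prefix update `x ↦ x q`. -/
def cocycleVertex (i : ι) : G i →* GP Γ G' ≀ᵣ (∀ i, G i) where
  toFun a := ⟨fun y => of Γ G' i (phiSyllable f y⁻¹ i a), Pi.mulSingle i a⟩
  map_one' := by ext <;> simp [phiSyllable]
  map_mul' a b := by
    ext y
    · simp [phiSyllable_mul, mul_inv_rev]
    · simp [Pi.mulSingle_mul]

lemma cocycleVertex_commute_of_adj {i j : ι} (hadj : Γ.Adj i j) (a : G i) (b : G j) :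
    Commute (cocycleVertex f Γ i a) (cocycleVertex f Γ j b) := by
  have hij : i ≠ j := hadj.ne
  refine RegularWreathProduct.ext (funext fun y => ?_) (Pi.mulSingle_commute hij a b).eq
  simp only [cocycleVertex, MonoidHom.coe_mk, OneHom.coe_mk, RegularWreathProduct.mul_left,
    Pi.mul_apply, phiSyllable, Pi.inv_apply, mul_inv_rev, Pi.mulSingle_eq_of_ne hij,
    Pi.mulSingle_eq_of_ne hij.symm, inv_one, mul_one]
  exact (of_commute_of_adj Γ hadj _ _).eq

def cocycleHom : GP Γ G →* GP Γ G' ≀ᵣ (∀ i, G i) :=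
  lift Γ (cocycleVertex f Γ) fun _ _ hadj => cocycleVertex_commute_of_adj f Γ hadj

lemma cocycleHom_right (z : GP Γ G) : (cocycleHom f Γ z).right = proj Γ G z := by
  have : RegularWreathProduct.rightHom.comp (cocycleHom f Γ) = proj Γ G :=
    hom_ext Γ fun i a => by simp [cocycleHom, cocycleVertex]
  exact DFunLike.congr_fun this z

def cocycle (x : ∀ i, G i) (z : GP Γ G) : GP Γ G' :=
  (cocycleHom f Γ z).left x⁻¹

lemma cocycle_mul (x : ∀ i, G i) (z₁ z₂ : GP Γ G) :
    cocycle f Γ x (z₁ * z₂) = cocycle f Γ x z₁ * cocycle f Γ (x * proj Γ G z₁) z₂ := by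
  simp [cocycle, cocycleHom_right, mul_inv_rev]

lemma cocycle_of_mul (x : ∀ i, G i) (i : ι) (a : G i) (z : GP Γ G) :
    cocycle f Γ x (of Γ G i a * z) =
      of Γ G' i (phiSyllable f x i a) * cocycle f Γ (x * Pi.mulSingle i a) z := by
  rw [cocycle_mul, proj_of]
  simp [cocycle, cocycleHom, cocycleVertex]

lemma cocycle_wordProd (x : ∀ i, G i) (w : List (Σ i, G i)) :
    cocycle f Γ x (wordProd Γ G w) = wordProd Γ G' (phiAux f x w) := by
  induction w generalizing x with
  | nil => simp [cocycle, phiAux]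
  | cons s w ih =>
    rw [wordProd_cons, cocycle_of_mul, ih, phiAux, wordProd_append, wordProd_phiStep]

lemma proj_cocycle (x : ∀ i, G i) (z : GP Γ G) :
    proj Γ G' (cocycle f Γ x z) = (Pi.map f x)⁻¹ * Pi.map f (x * proj Γ G z) := by
  obtain ⟨w, rfl⟩ := exists_wordProd_eq Γ z
  induction w generalizing x with
  | nil => simp [cocycle]
  | cons s w ih =>
    rw [wordProd_cons, cocycle_of_mul, map_mul, ih, proj_of, mulSingle_phiSyllable, map_mul,
      proj_of, mul_assoc x]
    group

lemma cocycle_cocycle_of_leftInverse {g : ∀ i, G' i → G i}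
    (hgf : ∀ i, Function.LeftInverse (g i) (f i)) (x : ∀ i, G i) (z : GP Γ G) :
    cocycle g Γ (Pi.map f x) (cocycle f Γ x z) = z := by
  obtain ⟨w, rfl⟩ := exists_wordProd_eq Γ z
  induction w generalizing x with
  | nil => simp [cocycle]
  | cons s w ih =>
    rw [wordProd_cons, cocycle_of_mul, cocycle_of_mul, phiSyllable_leftInverse f hgf,
      mulSingle_phiSyllable, mul_inv_cancel_left, ih]

lemma phiAux_length_le (x : ∀ i, G i) (w : List (Σ i, G i)) :
    (phiAux f x w).length ≤ w.length := by
  induction w generalizing x with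
  | nil => simp [phiAux]
  | cons s w ih =>
    have hstep : (phiStep f x s).length ≤ 1 := by unfold phiStep; split_ifs <;> simp
    simp only [phiAux, List.length_append, List.length_cons]
    have := ih (x * Pi.mulSingle s.1 s.2)
    omega

lemma nl_cocycle_le (x : ∀ i, G i) (z : GP Γ G) : nl Γ G' (cocycle f Γ x z) ≤ nl Γ G z := by
  obtain ⟨w, rfl, hw⟩ := exists_wordProd_eq_length_eq_nl Γ z
  rw [← hw, cocycle_wordProd]
  exact (nl_wordProd_le_length Γ _).trans (phiAux_length_le f x w)

lemma nl_cocycle {f : ∀ i, G i → G' i} (hinj : ∀ i, Function.Injective (f i)) (x : ∀ i, G i)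
    (z : GP Γ G) : nl Γ G' (cocycle f Γ x z) = nl Γ G z := by
  refine le_antisymm (nl_cocycle_le f Γ x z) ?_
  have hleft i := Function.leftInverse_invFun (hinj i)
  calc nl Γ G z = nl Γ G (cocycle _ Γ (Pi.map f x) (cocycle f Γ x z)) := by
        rw [cocycle_cocycle_of_leftInverse f Γ hleft]
    _ ≤ nl Γ G' (cocycle f Γ x z) := nl_cocycle_le _ Γ _ _

def phiKer : (proj Γ G).ker →* (proj Γ G').ker where
  toFun k := ⟨cocycle f Γ 1 k, by
    rw [MonoidHom.mem_ker, proj_cocycle, MonoidHom.mem_ker.mp k.2, mul_one, inv_mul_cancel]⟩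
  map_one' := by ext; simp [cocycle]
  map_mul' k₁ k₂ := by
    ext
    simp [cocycle_mul, MonoidHom.mem_ker.mp k₁.2]

@[simp] lemma coe_phiKer (k : (proj Γ G).ker) : (phiKer f Γ k : GP Γ G') = cocycle f Γ 1 k :=
  rfl

end Cocycle

theorem stmt9_general {ι : Type*} [DecidableEq ι] (Γ : SimpleGraph ι)
    (G G' : ι → Type*) [∀ i, Group (G i)] [∀ i, Group (G' i)]
    (f : ∀ i, G i → G' i) (hinj : ∀ i, Function.Injective (f i)) :
    ∃ Φ : (proj Γ G).ker →* (proj Γ G').ker,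
      (∀ (w : List (Σ i, G i)) (hw : wordProd Γ G w ∈ (proj Γ G).ker),
          (Φ ⟨wordProd Γ G w, hw⟩ : GP Γ G') = wordProd Γ G' (phiWord f w)) ∧
      (∀ x y : (proj Γ G).ker,
          nl Γ G' ((Φ x : GP Γ G')⁻¹ * (Φ y : GP Γ G')) =
            nl Γ G ((x : GP Γ G)⁻¹ * (y : GP Γ G))) := by
  refine ⟨phiKer f Γ, fun w _ => cocycle_wordProd f Γ 1 w, fun x y => ?_⟩
  rw [← Subgroup.coe_inv, ← Subgroup.coe_mul, ← map_inv, ← map_mul, coe_phiKer,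
    nl_cocycle Γ hinj, Subgroup.coe_mul, Subgroup.coe_inv]

/-- For injective identity-preserving set maps `f i`, the induced
homomorphism `Φ_Γ : K_Γ → K'_Γ` is an isometric embedding for the normal length
metrics `d_nl(g,h) = nl(g⁻¹h)`. -/
theorem stmt9 {ι : Type*} [DecidableEq ι] [Fintype ι] (Γ : SimpleGraph ι)
    (G G' : ι → Type*) [∀ i, Group (G i)] [∀ i, Group (G' i)]
    (f : ∀ i, G i → G' i) (hinj : ∀ i, Function.Injective (f i)) (hf : ∀ i, f i 1 = 1) :
    ∃ Φ : (proj Γ G).ker →* (proj Γ G').ker,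
      (∀ (w : List (Σ i, G i)) (hw : wordProd Γ G w ∈ (proj Γ G).ker),
          (Φ ⟨wordProd Γ G w, hw⟩ : GP Γ G') = wordProd Γ G' (phiWord f w)) ∧
      (∀ x y : (proj Γ G).ker,
          nl Γ G' ((Φ x : GP Γ G')⁻¹ * (Φ y : GP Γ G')) =
            nl Γ G ((x : GP Γ G)⁻¹ * (y : GP Γ G))) :=
  stmt9_general Γ G G' f hinj

end GPaper
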